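/- For any f : {−1,1}^n → {−1,1} and δ ∈ (0,1], Σ_{i=1}^n E_{x uniform}[(f_δ(x) − f_δ(x^{~i}))²] ≤ 1/(e·δ), where x^{~i} equals x with its i-th coordinate replaced by an independent uniform bit and f_δ is the δ-smoothed version of f. -/

import Mathlib

/-!
Noise smoothing of boolean functions on {-1,1}^n; a point of the cube is encoded as
`x : Fin n → Bool` (`true` encodes 1, `false` encodes -1).
-/

/-- The ±1 real value encoded by a boolean: `true ↦ 1`, `false ↦ -1`. -/
noncomputable def bval (b : Bool) : ℝ := if b then 1 else -1

/-- The `δ`-smoothed version of `g`: `g_δ(x) = E[g(x̃)]`, where `x̃` is obtained from `x`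
by flipping each coordinate independently with probability `δ/2` (equivalently,
rerandomizing each coordinate independently with probability `δ`). -/
noncomputable def smooth {n : ℕ} (δ : ℝ) (g : (Fin n → Bool) → ℝ) (x : Fin n → Bool) : ℝ :=
  ∑ y : Fin n → Bool, (∏ i : Fin n, if y i = x i then 1 - δ / 2 else δ / 2) * g y

/-- `E_x[(u(x) − u(x^{~i}))²]`, where `x` is uniform and `x^{~i}` is `x` with its `i`-th
coordinate rerandomized (replaced by an independent uniform bit). -/
noncomputable def sqInfl {n : ℕ} (u : (Fin n → Bool) → ℝ) (i : Fin n) : ℝ :=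
  (∑ x : Fin n → Bool,
      ((u x - u (Function.update x i true)) ^ 2 +
        (u x - u (Function.update x i false)) ^ 2) / 2) / 2 ^ n

/-!
Expand in the Walsh basis `χ_S(x) = ∏_{i ∈ S} x_i`. Smoothing multiplies the coefficient of `χ_S`
by `(1 - δ)^|S|`, and flipping coordinate `i` negates exactly the `χ_S` with `i ∈ S`; by
orthogonality the left-hand side is therefore `2 Σ_S |S| (1 - δ)^(2|S|) f̂(S)²`. Now
`k (1 - δ)^(2k) ≤ k e^(-2kδ) ≤ 1 / (2eδ)` because `t e^(-t) ≤ 1/e`, and `Σ_S f̂(S)² = E[f²] = 1`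
by Parseval.
-/

open Finset

namespace BooleanCube

variable {n : ℕ}

noncomputable def walsh (S : Finset (Fin n)) (x : Fin n → Bool) : ℝ :=
  ∏ i ∈ S, bval (x i)

lemma bval_mul_self (b : Bool) : bval b * bval b = 1 := by
  cases b <;> norm_num [bval]

lemma walsh_eq_prod_univ (S : Finset (Fin n)) (x : Fin n → Bool) :
    walsh S x = ∏ i, if i ∈ S then bval (x i) else 1 :=
  (Fintype.prod_ite_mem S _).symm

lemma sum_cube_prod (g : Fin n → Bool → ℝ) :
    ∑ x : Fin n → Bool, ∏ i, g i (x i) = ∏ i, ∑ b, g i b :=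
  (Fintype.prod_sum g).symm

theorem sum_walsh_mul_walsh (S T : Finset (Fin n)) :
    ∑ x, walsh S x * walsh T x = if S = T then 2 ^ n else 0 := by
  have hcoord (i : Fin n) :
      ∑ b : Bool, (if i ∈ S then bval b else 1) * (if i ∈ T then bval b else 1)
        = if (i ∈ S ↔ i ∈ T) then 2 else 0 := by
    by_cases hS : i ∈ S <;> by_cases hT : i ∈ T <;> norm_num [hS, hT, bval]
  simp_rw [walsh_eq_prod_univ, ← prod_mul_distrib]
  rw [sum_cube_prod (fun i b => (if i ∈ S then bval b else 1) * (if i ∈ T then bval b else 1))]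
  simp_rw [hcoord, Fintype.prod_ite_zero, ← Finset.ext_iff]
  simp

theorem sum_walsh_mul_walsh_right (x y : Fin n → Bool) :
    ∑ S, walsh S x * walsh S y = if x = y then 2 ^ n else 0 := by
  have hcoord (i : Fin n) : 1 + bval (x i) * bval (y i) = if x i = y i then 2 else 0 := by
    cases x i <;> cases y i <;> norm_num [bval]
  simp_rw [walsh, ← prod_mul_distrib, ← powerset_univ, ← prod_one_add, hcoord,
    Fintype.prod_ite_zero, ← funext_iff]
  simp

theorem sum_sq_walsh_expansion (c : Finset (Fin n) → ℝ) :
    ∑ x, (∑ S, c S * walsh S x) ^ 2 = 2 ^ n * ∑ S, c S ^ 2 := by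
  calc ∑ x, (∑ S, c S * walsh S x) ^ 2
      = ∑ S, ∑ T, c S * c T * ∑ x, walsh S x * walsh T x := by
        simp_rw [sq, sum_mul_sum, mul_sum]
        rw [sum_comm]
        refine sum_congr rfl fun S _ => ?_
        rw [sum_comm]
        exact sum_congr rfl fun T _ => sum_congr rfl fun x _ => by ring
    _ = 2 ^ n * ∑ S, c S ^ 2 := by
        simp_rw [sum_walsh_mul_walsh, mul_ite, mul_zero, sum_ite_eq, mem_univ, if_true, mul_sum]
        exact sum_congr rfl fun S _ => by ring

noncomputable def walshCoeff (g : (Fin n → Bool) → ℝ) (S : Finset (Fin n)) : ℝ :=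
  (∑ x, g x * walsh S x) / 2 ^ n

theorem walsh_expansion (g : (Fin n → Bool) → ℝ) (x : Fin n → Bool) :
    ∑ S, walshCoeff g S * walsh S x = g x := by
  calc ∑ S, walshCoeff g S * walsh S x
      = (∑ y, g y * ∑ S, walsh S y * walsh S x) / 2 ^ n := by
        simp_rw [walshCoeff, div_mul_eq_mul_div, ← sum_div, sum_mul, mul_sum]
        rw [sum_comm]
        exact congrArg (· / _) (sum_congr rfl fun y _ => sum_congr rfl fun S _ => by ring)
    _ = g x := by
        simp_rw [sum_walsh_mul_walsh_right, mul_ite, mul_zero, sum_ite_eq', mem_univ, if_true]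
        field_simp

theorem sum_walshCoeff_sq (g : (Fin n → Bool) → ℝ) :
    ∑ S, walshCoeff g S ^ 2 = (∑ x, g x ^ 2) / 2 ^ n := by
  conv_rhs => enter [1, 2, x]; rw [← walsh_expansion g x]
  rw [sum_sq_walsh_expansion]
  field_simp

theorem sum_walshCoeff_sq_bval (f : (Fin n → Bool) → Bool) :
    ∑ S, walshCoeff (fun x => bval (f x)) S ^ 2 = 1 := by
  rw [sum_walshCoeff_sq]
  simp [sq, bval_mul_self]

lemma smooth_sum_smul {ι : Type*} (δ : ℝ) (s : Finset ι) (c : ι → ℝ)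
    (g : ι → (Fin n → Bool) → ℝ) (x : Fin n → Bool) :
    smooth δ (fun y => ∑ j ∈ s, c j * g j y) x = ∑ j ∈ s, c j * smooth δ (g j) x := by
  simp_rw [smooth, mul_sum]
  rw [sum_comm]
  exact sum_congr rfl fun j _ => sum_congr rfl fun y _ => by ring

theorem smooth_walsh (δ : ℝ) (S : Finset (Fin n)) (x : Fin n → Bool) :
    smooth δ (walsh S) x = (1 - δ) ^ #S * walsh S x := by
  have hcoord (i : Fin n) : ∑ b : Bool,
      (if b = x i then 1 - δ / 2 else δ / 2) * (if i ∈ S then bval b else 1)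
      = if i ∈ S then (1 - δ) * bval (x i) else 1 := by
    by_cases hS : i ∈ S <;> cases x i <;> simp [hS, bval] <;> ring
  simp_rw [smooth, walsh_eq_prod_univ, ← prod_mul_distrib]
  rw [sum_cube_prod (fun i b => (if b = x i then 1 - δ / 2 else δ / 2) *
    (if i ∈ S then bval b else 1))]
  simp_rw [hcoord, Fintype.prod_ite_mem, prod_mul_distrib, prod_const]

theorem smooth_eq_walsh_expansion (δ : ℝ) (g : (Fin n → Bool) → ℝ) (x : Fin n → Bool) :
    smooth δ g x = ∑ S, (1 - δ) ^ #S * walshCoeff g S * walsh S x := by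
  conv_lhs => enter [2, y]; rw [← walsh_expansion g y]
  rw [smooth_sum_smul]
  simp_rw [smooth_walsh]
  exact sum_congr rfl fun S _ => by ring

lemma walsh_update_not (S : Finset (Fin n)) (x : Fin n → Bool) (i : Fin n) :
    walsh S (Function.update x i (!x i)) = if i ∈ S then -walsh S x else walsh S x := by
  have hcoord (j : Fin n) : bval (Function.update x i (!x i) j)
      = (if j = i then -1 else 1) * bval (x j) := by
    by_cases hj : j = i
    · subst hj; cases x j <;> simp [bval]
    · simp [hj]
  simp_rw [walsh, hcoord, prod_mul_distrib, prod_ite_eq']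
  split_ifs <;> ring

lemma sqInfl_eq_sum_flip (u : (Fin n → Bool) → ℝ) (i : Fin n) :
    sqInfl u i = (∑ x, (u x - u (Function.update x i (!x i))) ^ 2 / 2) / 2 ^ n := by
  refine congrArg (· / _) (sum_congr rfl fun x _ => ?_)
  -- one of the two updates at `i` leaves `x` unchanged, the other flips `x i`
  have hself := Function.update_eq_self i x
  cases hx : x i <;> rw [hx] at hself <;> simp [hself]

theorem sqInfl_walsh_expansion (c : Finset (Fin n) → ℝ) (i : Fin n) :
    sqInfl (fun x => ∑ S, c S * walsh S x) i = 2 * ∑ S, if i ∈ S then c S ^ 2 else 0 := by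
  have hdiff (x : Fin n → Bool) :
      ∑ S, c S * walsh S x - ∑ S, c S * walsh S (Function.update x i (!x i))
        = 2 * ∑ S, (if i ∈ S then c S else 0) * walsh S x := by
    rw [← sum_sub_distrib, mul_sum]
    refine sum_congr rfl fun S _ => ?_
    rw [walsh_update_not]
    split_ifs <;> ring
  rw [sqInfl_eq_sum_flip]
  simp_rw [hdiff, mul_pow, mul_div_assoc, ← mul_sum, ← sum_div, sum_sq_walsh_expansion]
  field_simp
  simp_rw [apply_ite (· ^ 2), zero_pow two_ne_zero]

theorem sum_sqInfl_walsh_expansion (c : Finset (Fin n) → ℝ) :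
    ∑ i, sqInfl (fun x => ∑ S, c S * walsh S x) i = 2 * ∑ S, #S * c S ^ 2 := by
  simp_rw [sqInfl_walsh_expansion, ← mul_sum]
  rw [sum_comm]
  simp_rw [Fintype.sum_ite_mem, sum_const, nsmul_eq_mul]

lemma mul_one_sub_pow_sq_le {δ : ℝ} (hδ0 : 0 < δ) (hδ1 : δ ≤ 1) (k : ℕ) :
    k * ((1 - δ) ^ k) ^ 2 ≤ 1 / (2 * Real.exp 1 * δ) := by
  have hdecay : ((1 - δ) ^ k) ^ 2 ≤ Real.exp (-(2 * k * δ)) := by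
    calc ((1 - δ) ^ k) ^ 2 ≤ (Real.exp (-δ) ^ k) ^ 2 := by
          gcongr
          exact Real.one_sub_le_exp_neg δ
      _ = Real.exp (-(2 * k * δ)) := by
          rw [← Real.exp_nat_mul, ← Real.exp_nat_mul]
          ring_nf
  calc (k : ℝ) * ((1 - δ) ^ k) ^ 2 ≤ k * Real.exp (-(2 * k * δ)) := by gcongr
    _ = 2 * k * δ * Real.exp (-(2 * k * δ)) / (2 * δ) := by field_simp
    _ ≤ Real.exp (-1) / (2 * δ) := by gcongr; exact Real.mul_exp_neg_le_exp_neg_one _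
    _ = 1 / (2 * Real.exp 1 * δ) := by rw [Real.exp_neg]; field_simp

end BooleanCube

open BooleanCube

/-- **Total influence of smoothed functions.** For any `f : {-1,1}^n → {-1,1}` and
`δ ∈ (0,1]`, `Σ_i E_x[(f_δ(x) − f_δ(x^{~i}))²] ≤ 1/(e·δ)`. -/
theorem stmt15 {n : ℕ} (f : (Fin n → Bool) → Bool) (δ : ℝ) (hδ0 : 0 < δ) (hδ1 : δ ≤ 1) :
    ∑ i : Fin n, sqInfl (smooth δ fun x => bval (f x)) i ≤ 1 / (Real.exp 1 * δ) := by
  set c := walshCoeff fun x => bval (f x)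
  rw [funext (smooth_eq_walsh_expansion δ _), sum_sqInfl_walsh_expansion]
  calc 2 * ∑ S, #S * ((1 - δ) ^ #S * c S) ^ 2
      ≤ 2 * ∑ S, 1 / (2 * Real.exp 1 * δ) * c S ^ 2 := by
        gcongr 2 * ∑ S, ?_ with S
        rw [mul_pow, ← mul_assoc]
        exact mul_le_mul_of_nonneg_right (mul_one_sub_pow_sq_le hδ0 hδ1 #S) (sq_nonneg _)
    _ = 1 / (Real.exp 1 * δ) := by
        rw [← mul_sum, sum_walshCoeff_sq_bval]
        field_simp
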